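/- arXiv:2311.17628 — 7 statements merged into one kernel-verified Lean document; each statement's English description precedes it below -/
import Mathlib

section
/- A finitely complete category C is a Mal'tsev category (every reflexive internal relation is an equivalence relation) if and only if every internal relation R ⟶ X × Z in C is difunctional, i.e. for generalized elements, (x₁ R z₂ ∧ x₂ R z₂ ∧ x₂ R z₁) implies x₁ R z₁. -/
open CategoryTheory

/-- An internal relation from `X` to `Z`: a jointly monomorphic span. -/
structure IntRel (C : Type*) [Category C] (X Z : C) where
  R : C
  r1 : R ⟶ X
  r2 : R ⟶ Z
  jointly_mono : ∀ {A : C} (f g : A ⟶ R), f ≫ r1 = g ≫ r1 → f ≫ r2 = g ≫ r2 → f = g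

namespace IntRel

variable {C : Type*} [Category C] {X Z : C}

/-- `(x, z) ∈_A R`: the pair of generalized elements factors through the relation. -/
def mem (S : IntRel C X Z) {A : C} (x : A ⟶ X) (z : A ⟶ Z) : Prop :=
  ∃ h : A ⟶ S.R, h ≫ S.r1 = x ∧ h ≫ S.r2 = z

/-- Difunctionality via generalized elements. -/
def Difunctional (S : IntRel C X Z) : Prop :=
  ∀ {A : C} (x₁ x₂ : A ⟶ X) (z₁ z₂ : A ⟶ Z),
    S.mem x₁ z₂ → S.mem x₂ z₂ → S.mem x₂ z₁ → S.mem x₁ z₁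

/-- A reflexive internal relation on `X`. -/
def Reflexive (S : IntRel C X X) : Prop := ∀ {A : C} (x : A ⟶ X), S.mem x x

/-- A symmetric internal relation on `X`. -/
def Symmetric (S : IntRel C X X) : Prop :=
  ∀ {A : C} (x y : A ⟶ X), S.mem x y → S.mem y x

/-- A transitive internal relation on `X`. -/
def Transitive (S : IntRel C X X) : Prop :=
  ∀ {A : C} (x y z : A ⟶ X), S.mem x y → S.mem y z → S.mem x z

/-- An internal equivalence relation. -/
def IsEquivalence (S : IntRel C X X) : Prop :=
  S.Reflexive ∧ S.Symmetric ∧ S.Transitive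

end IntRel

/-!
For a relation `⟨r₁, r₂⟩ : R ⟶ X × Z`, relate two generalized elements `ρ, ρ'` of `R` when
`(r₁ ρ, r₂ ρ') ∈ R`. This relation on `R` is reflexive, and its transitivity is exactly the
difunctionality of `R`, so Mal'tsev categories have difunctional relations. Conversely, a
reflexive difunctional relation is symmetric (`y ~ y, x ~ y, x ~ x ⇒ y ~ x`) and transitive
(`x ~ y, y ~ y, y ~ z ⇒ x ~ z`).
-/

open Limits

namespace IntRel

variable {C : Type*} [Category C]

theorem Reflexive.isEquivalence_of_difunctional {X : C} {S : IntRel C X X} (hR : S.Reflexive)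
    (hD : S.Difunctional) : S.IsEquivalence :=
  ⟨hR, fun x y hxy => hD y x x y (hR y) hxy (hR x), fun x y z hxy hyz => hD x y z y hxy (hR y) hyz⟩

theorem mem_r1_r2 {X Z : C} (S : IntRel C X Z) {A : C} (h : A ⟶ S.R) :
    S.mem (h ≫ S.r1) (h ≫ S.r2) :=
  ⟨h, rfl, rfl⟩

variable [HasBinaryProducts C] [HasPullbacks C] {X Z Y W : C}

-- Reducible, so that the lemmas about `pullback.lift` and `pullback.snd` apply to morphisms
-- into `(S.comap f g).R`.
noncomputable abbrev comap (S : IntRel C X Z) (f : Y ⟶ X) (g : W ⟶ Z) : IntRel C Y W where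
  R := pullback (prod.lift S.r1 S.r2) (prod.map f g)
  r1 := pullback.snd _ _ ≫ prod.fst
  r2 := pullback.snd _ _ ≫ prod.snd
  jointly_mono := by
    intro A u v h₁ h₂
    have hsnd : u ≫ pullback.snd _ _ = v ≫ pullback.snd _ _ :=
      prod.hom_ext (by simpa only [Category.assoc] using h₁)
        (by simpa only [Category.assoc] using h₂)
    have hlift : u ≫ pullback.fst _ _ ≫ prod.lift S.r1 S.r2 =
        v ≫ pullback.fst _ _ ≫ prod.lift S.r1 S.r2 := by
      rw [pullback.condition, ← Category.assoc, hsnd, Category.assoc]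
    have hfst : u ≫ pullback.fst _ _ = v ≫ pullback.fst _ _ :=
      S.jointly_mono _ _ (by simpa only [Category.assoc, prod.lift_fst] using hlift =≫ prod.fst)
        (by simpa only [Category.assoc, prod.lift_snd] using hlift =≫ prod.snd)
    exact pullback.hom_ext hfst hsnd

theorem mem_comap (S : IntRel C X Z) (f : Y ⟶ X) (g : W ⟶ Z) {A : C} (u : A ⟶ Y)
    (v : A ⟶ W) : (S.comap f g).mem u v ↔ S.mem (u ≫ f) (v ≫ g) := by
  constructor
  · rintro ⟨h, rfl, rfl⟩
    have hcond := h ≫= pullback.condition (f := prod.lift S.r1 S.r2) (g := prod.map f g)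
    refine ⟨h ≫ pullback.fst _ _, ?_, ?_⟩
    · simpa only [Category.assoc, prod.lift_fst, prod.map_fst] using hcond =≫ prod.fst
    · simpa only [Category.assoc, prod.lift_snd, prod.map_snd] using hcond =≫ prod.snd
  · rintro ⟨k, hk₁, hk₂⟩
    refine ⟨pullback.lift k (prod.lift u v) (prod.hom_ext ?_ ?_), ?_, ?_⟩
    · simp only [Category.assoc, prod.lift_fst, prod.lift_map_assoc, hk₁]
    · simp only [Category.assoc, prod.lift_snd, prod.lift_map_assoc, hk₂]
    · simp only [pullback.lift_snd_assoc, prod.lift_fst]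
    · simp only [pullback.lift_snd_assoc, prod.lift_snd]

theorem reflexive_comap_r1_r2 (S : IntRel C X Z) : (S.comap S.r1 S.r2).Reflexive :=
  fun x => (S.mem_comap _ _ x x).2 (S.mem_r1_r2 x)

theorem difunctional_of_transitive_comap_r1_r2 (S : IntRel C X Z)
    (hS : (S.comap S.r1 S.r2).Transitive) : S.Difunctional := by
  rintro A x₁ x₂ z₁ z₂ ⟨a, rfl, ha⟩ ⟨b, hb, hba⟩ ⟨c, rfl, rfl⟩
  have hab : (S.comap S.r1 S.r2).mem a b := (S.mem_comap _ _ a b).2 ⟨a, rfl, ha.trans hba.symm⟩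
  have hbc : (S.comap S.r1 S.r2).mem b c := (S.mem_comap _ _ b c).2 ⟨c, hb.symm, rfl⟩
  exact (S.mem_comap _ _ a c).1 (hS a b c hab hbc)

end IntRel

/-- A finitely complete category is a Mal'tsev category (every internal reflexive
relation is an equivalence relation) if and only if every internal relation is
difunctional. -/
theorem maltsev_iff_difunctional (C : Type*) [Category C] [Limits.HasFiniteLimits C] :
    (∀ (X : C) (S : IntRel C X X), S.Reflexive → S.IsEquivalence) ↔
    (∀ (X Z : C) (S : IntRel C X Z), S.Difunctional) :=
  ⟨fun hM _ _ S => S.difunctional_of_transitive_comap_r1_r2 (hM _ _ S.reflexive_comap_r1_r2).2.2,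
    fun hD X S hR => hR.isEquivalence_of_difunctional (hD X X S)⟩
end

section
/- A monoid Y is a W-Mal'tsev object in the category of monoids if and only if Y is a group; here it suffices to prove: if for every x ∈ Y the element ([x̲],[x̲]) of (Y+Y)×(Y+Y) lies in the image of the map 3Y → 2Y × 2Y defined on coproduct injections by ι₁ ↦ (ι₁,ι₂), ι₂ ↦ (ι₂,ι₂), ι₃ ↦ (ι₂,ι₁), then every element of Y has a two-sided inverse. -/
/-!
Let `Y ∗ Y` act on its reduced words (`true` marks the left summand) and apply both components
of `maltsevMap a` to the empty word. Call the product of the letters of the first word, leaving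
out a final left letter, its pending part. Each generator of `Y ∗ (Y ∗ Y)` multiplies the pending
part by the letter it pushes onto the second word, except that a generator of the first summand
may push a right letter onto the second word while the pending part stays `1`. `Admissible`
records what this bookkeeping allows, closed under the cancellations in the second word. Left
letters of the second word are never free, so when both words end as `ι₁ x`, the pending part `1`
is `x` times a right invertible element, and `x` is a unit.
-/

namespace Monoid.CoprodI.Word

variable {ι : Type*} {M : ι → Type*} [∀ i, Monoid (M i)]

theorem fstIdx_ne_or_toList_eq_cons (w : Word M) (i : ι) :
    w.fstIdx ≠ some i ∨ ∃ (u : M i) (t : List (Σ i, M i)), w.toList = ⟨i, u⟩ :: t := by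
  rcases hw : w.toList with _ | ⟨⟨j, u⟩, t⟩
  · simp [fstIdx, hw]
  · by_cases hij : j = i
    · subst hij
      exact Or.inr ⟨u, t, rfl⟩
    · simp [fstIdx, hw, hij]

variable [DecidableEq ι] [∀ i, DecidableEq (M i)]

theorem toList_of_smul_of_fstIdx_ne {i : ι} (m : M i) {w : Word M} (hw : w.fstIdx ≠ some i) :
    (of m • w).toList = if m = 1 then w.toList else ⟨i, m⟩ :: w.toList := by
  rw [of_smul_def, equivPair_eq_of_fstIdx_ne hw]
  by_cases hm : m = 1 <;> simp [rcons, hm]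

theorem toList_of_smul_of_toList_eq_cons {i : ι} (m : M i) {w : Word M} {u : M i}
    {t : List (Σ i, M i)} (hw : w.toList = ⟨i, u⟩ :: t) :
    (of m • w).toList = if m * u = 1 then t else ⟨i, m * u⟩ :: t := by
  have hu : u ≠ 1 := w.ne_one ⟨i, u⟩ (hw ▸ List.mem_cons_self)
  let tail : Word M := ⟨t, fun l hl => w.ne_one l (hw ▸ List.mem_cons_of_mem _ hl),
    (hw ▸ w.chain_ne).tail⟩
  have htail : tail.fstIdx ≠ some i := by
    have hchain := w.chain_ne
    rw [hw] at hchain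
    cases t with
    | nil => simp [tail, fstIdx]
    | cons p t => simpa [tail, fstIdx, eq_comm] using (List.isChain_cons_cons.1 hchain).1
  have hpair : equivPair i w = ⟨u, tail, htail⟩ := by
    rw [← Equiv.eq_symm_apply, equivPair_symm, eq_comm]
    ext1
    simp [rcons, hu, hw, tail]
  rw [of_smul_def, hpair]
  by_cases hm : m * u = 1 <;> simp [rcons, hm, tail]

end Monoid.CoprodI.Word

namespace WMaltsev

open Monoid Monoid.CoprodI Word

variable {Y : Type*} [Monoid Y]

inductive Admissible : Y → List (Σ _ : Bool, Y) → Prop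
  | nil : Admissible 1 []
  | cons (b : Bool) (z : Y) {v : Y} {t : List (Σ _ : Bool, Y)} :
      Admissible v t → Admissible (z * v) (⟨b, z⟩ :: t)
  | mergeHead (b : Bool) (z : Y) {v u : Y} {t : List (Σ _ : Bool, Y)} :
      Admissible v (⟨b, u⟩ :: t) → Admissible (z * v) (⟨b, z * u⟩ :: t)
  | consRight (c : Y) {t : List (Σ _ : Bool, Y)} :
      Admissible 1 t → Admissible 1 (⟨false, c⟩ :: t)
  | mergeRight (c : Y) {u : Y} {t : List (Σ _ : Bool, Y)} :
      Admissible 1 (⟨false, u⟩ :: t) → Admissible 1 (⟨false, c * u⟩ :: t)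
  | ofMulEqOne {z ζ : Y} {l : List (Σ _ : Bool, Y)} :
      z * ζ = 1 → Admissible 1 l → Admissible z l

namespace Admissible

theorem exists_mul_eq_one_of_nil {v : Y} (h : Admissible v []) : ∃ γ, v * γ = 1 := by
  cases h with
  | nil => exact ⟨1, one_mul 1⟩
  | ofMulEqOne hz _ => exact ⟨_, hz⟩

theorem mul_right {v : Y} {l : List (Σ _ : Bool, Y)} (h : Admissible v l) {j ζ : Y}
    (hj : j * ζ = 1) : Admissible (v * j) l := by
  induction h with
  | nil => exact ofMulEqOne (by rwa [one_mul]) nil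
  | cons b z _ ih => rw [mul_assoc]; exact cons b z ih
  | mergeHead b z _ ih => rw [mul_assoc]; exact mergeHead b z ih
  | consRight c h => exact ofMulEqOne (by rwa [one_mul]) (consRight c h)
  | mergeRight c h => exact ofMulEqOne (by rwa [one_mul]) (mergeRight c h)
  | @ofMulEqOne z ζ₀ _ hz h =>
    refine ofMulEqOne (ζ := ζ * ζ₀) ?_ h
    rw [mul_assoc, ← mul_assoc j, hj, one_mul, hz]

theorem one_of_isUnit {v : Y} {l : List (Σ _ : Bool, Y)} (h : Admissible v l) (hv : IsUnit v) :
    Admissible 1 l := by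
  cases h with
  | nil => exact nil
  | cons b z h =>
    obtain ⟨ρ, hρ⟩ := hv
    have := cons b z (h.mul_right ρ.inv_mul)
    rwa [← mul_assoc, ← hρ, ρ.mul_inv] at this
  | mergeHead b z h =>
    obtain ⟨ρ, hρ⟩ := hv
    have := mergeHead b z (h.mul_right ρ.inv_mul)
    rwa [← mul_assoc, ← hρ, ρ.mul_inv] at this
  | consRight c h => exact consRight c h
  | mergeRight c h => exact mergeRight c h
  | ofMulEqOne _ h => exact h

theorem pop_right {v u P z ξ : Y} {t : List (Σ _ : Bool, Y)}
    (h : Admissible v (⟨false, u⟩ :: t)) (hP : P * v = 1) (hz : z * ξ * P * u = 1) :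
    Admissible z t := by
  generalize hl : (⟨false, u⟩ :: t : List (Σ _ : Bool, Y)) = l at h
  induction h generalizing u P ξ with
  | nil => cases hl
  | @cons b z₁ v₀ t₀ h _ =>
    obtain ⟨hl, rfl⟩ := List.cons_eq_cons.1 hl
    cases hl
    have hv₀ : v₀ = z * ξ := by
      calc v₀ = z * ξ * P * z₁ * v₀ := by rw [hz, one_mul]
        _ = z * ξ := by rw [mul_assoc (z * ξ), mul_assoc (z * ξ), mul_assoc P, hP, mul_one]
    have hunit : IsUnit v₀ := isUnit_iff_exists.2
      ⟨P * z₁, by rw [hv₀]; simpa only [mul_assoc] using hz, by rwa [mul_assoc]⟩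
    exact ofMulEqOne (ζ := ξ * P * z₁) (by simpa only [mul_assoc] using hz)
      (h.one_of_isUnit hunit)
  | @mergeHead b z₁ v₀ u₀ t₀ h ih =>
    obtain ⟨hl, rfl⟩ := List.cons_eq_cons.1 hl
    cases hl
    exact ih (P := P * z₁) (by rwa [mul_assoc]) (by simpa only [mul_assoc] using hz) rfl
  | consRight c h =>
    obtain ⟨hl, rfl⟩ := List.cons_eq_cons.1 hl
    cases hl
    exact ofMulEqOne (ζ := ξ * P * c) (by simpa only [mul_assoc] using hz) h
  | mergeRight c h ih =>
    obtain ⟨hl, rfl⟩ := List.cons_eq_cons.1 hl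
    cases hl
    exact ih (ξ := ξ * P * c) (P := 1) (mul_one 1)
      (by simpa only [mul_assoc, mul_one] using hz) rfl
  | ofMulEqOne _ h ih =>
    exact ih (ξ := ξ * P) (P := 1) (mul_one 1) (by simpa only [mul_assoc, mul_one] using hz) hl

theorem pop {v a z : Y} {b : Bool} {t : List (Σ _ : Bool, Y)}
    (h : Admissible v (⟨b, a⟩ :: t)) (hz : z * a = 1) : Admissible (z * v) t := by
  generalize hl : (⟨b, a⟩ :: t : List (Σ _ : Bool, Y)) = l at h
  induction h generalizing a z with
  | nil => cases hl
  | cons b z₁ h =>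
    obtain ⟨hl, rfl⟩ := List.cons_eq_cons.1 hl
    cases hl
    rwa [← mul_assoc, hz, one_mul]
  | mergeHead b z₁ h ih =>
    obtain ⟨hl, rfl⟩ := List.cons_eq_cons.1 hl
    cases hl
    rw [← mul_assoc]
    exact ih (by rwa [mul_assoc]) rfl
  | consRight c h =>
    obtain ⟨hl, rfl⟩ := List.cons_eq_cons.1 hl
    cases hl
    rw [mul_one]
    exact ofMulEqOne hz h
  | mergeRight c h =>
    obtain ⟨hl, rfl⟩ := List.cons_eq_cons.1 hl
    cases hl
    rw [mul_one]
    exact h.pop_right (mul_one 1) (by rwa [mul_one, mul_assoc])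
  | ofMulEqOne hz₀ _ ih =>
    simpa only [mul_one] using (ih hz hl).mul_right hz₀

theorem isUnit_mul_of_singleton_left {v A P : Y} (h : Admissible v [⟨true, A⟩])
    (hP : P * v = 1) : IsUnit (P * A) := by
  generalize hl : ([⟨true, A⟩] : List (Σ _ : Bool, Y)) = l at h
  induction h generalizing A P with
  | nil => cases hl
  | cons b z h =>
    obtain ⟨hl, rfl⟩ := List.cons_eq_cons.1 hl
    cases hl
    obtain ⟨γ, hγ⟩ := h.exists_mul_eq_one_of_nil
    have hv : IsUnit _ := isUnit_iff_exists_and_exists.2 ⟨⟨γ, hγ⟩, ⟨P * z, by rwa [mul_assoc]⟩⟩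
    exact hv.mul_right_iff.1 (by rw [mul_assoc, hP]; exact isUnit_one)
  | mergeHead b z h ih =>
    obtain ⟨hl, rfl⟩ := List.cons_eq_cons.1 hl
    cases hl
    rw [← mul_assoc]
    exact ih (by rwa [mul_assoc]) rfl
  | consRight c h => cases hl
  | mergeRight c h => cases hl
  | @ofMulEqOne z₀ ζ₀ _ hz₀ _ ih =>
    have hz₀ : IsUnit z₀ := isUnit_iff_exists_and_exists.2 ⟨⟨ζ₀, hz₀⟩, ⟨P, hP⟩⟩
    have hP : IsUnit P := hz₀.mul_right_iff.1 (by rw [hP]; exact isUnit_one)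
    exact hP.mul (by simpa only [one_mul] using ih (mul_one 1) hl)

end Admissible

def pending : List (Σ _ : Bool, Y) → Y
  | [] => 1
  | [⟨true, _⟩] => 1
  | ⟨_, u⟩ :: l => u * pending l

theorem pending_right_cons (u : Y) (l : List (Σ _ : Bool, Y)) :
    pending (⟨false, u⟩ :: l) = u * pending l := by
  cases l <;> rfl

theorem pending_cons_cons (b : Bool) (u : Y) (p : Σ _ : Bool, Y) (l : List (Σ _ : Bool, Y)) :
    pending (⟨b, u⟩ :: p :: l) = u * pending (p :: l) := by
  cases b <;> rfl

def Compatible (w₁ w₂ : Word fun _ : Bool => Y) : Prop :=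
  Admissible (pending w₁.toList) w₂.toList

theorem compatible_empty : Compatible (empty : Word fun _ : Bool => Y) empty :=
  Admissible.nil

def toCoprodI : Coprod Y Y →* CoprodI fun _ : Bool => Y :=
  Coprod.lift (of (M := fun _ : Bool => Y) (i := true)) (of (M := fun _ : Bool => Y) (i := false))

def maltsevMap : Coprod Y (Coprod Y Y) →* Coprod Y Y × Coprod Y Y :=
  Coprod.lift
    ((Coprod.inl : Y →* Coprod Y Y).prod (Coprod.inr : Y →* Coprod Y Y))
    (Coprod.lift
      ((Coprod.inr : Y →* Coprod Y Y).prod (Coprod.inr : Y →* Coprod Y Y))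
      ((Coprod.inr : Y →* Coprod Y Y).prod (Coprod.inl : Y →* Coprod Y Y)))

variable [DecidableEq Y]

theorem pending_push_right (y : Y) (w : Word fun _ : Bool => Y) :
    pending ((of (i := false) y : CoprodI fun _ : Bool => Y) • w).toList =
      y * pending w.toList := by
  rcases fstIdx_ne_or_toList_eq_cons w false with hw | ⟨u, t, hw⟩
  · rw [toList_of_smul_of_fstIdx_ne _ hw]
    split_ifs with hy
    · rw [hy, one_mul]
    · exact pending_right_cons y _
  · rw [toList_of_smul_of_toList_eq_cons _ hw, hw, pending_right_cons]
    split_ifs with hyu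
    · rw [← mul_assoc, hyu, one_mul]
    · rw [pending_right_cons, mul_assoc]

theorem pending_push_left (y : Y) (w : Word fun _ : Bool => Y) :
    pending ((of (i := true) y : CoprodI fun _ : Bool => Y) • w).toList =
        y * pending w.toList ∨
      pending w.toList = 1 ∧
        pending ((of (i := true) y : CoprodI fun _ : Bool => Y) • w).toList = 1 := by
  rcases fstIdx_ne_or_toList_eq_cons w true with hw | ⟨u, t, hw⟩
  · rw [toList_of_smul_of_fstIdx_ne _ hw]
    split_ifs with hy
    · exact Or.inl (by rw [hy, one_mul])
    · rcases w.toList with _ | ⟨p, l⟩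
      · exact Or.inr ⟨rfl, rfl⟩
      · exact Or.inl (pending_cons_cons _ _ _ _)
  · rw [toList_of_smul_of_toList_eq_cons _ hw, hw]
    rcases t with _ | ⟨p, t⟩
    · refine Or.inr ⟨rfl, ?_⟩
      split_ifs <;> rfl
    · refine Or.inl ?_
      rw [pending_cons_cons]
      split_ifs with hyu
      · rw [← mul_assoc, hyu, one_mul]
      · rw [pending_cons_cons, mul_assoc]

theorem Admissible.push {v : Y} {w : Word fun _ : Bool => Y} (h : Admissible v w.toList)
    (b : Bool) (y : Y) :
    Admissible (y * v) ((of (i := b) y : CoprodI fun _ : Bool => Y) • w).toList := by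
  rcases fstIdx_ne_or_toList_eq_cons w b with hw | ⟨u, t, hw⟩
  · rw [toList_of_smul_of_fstIdx_ne _ hw]
    split_ifs with hy
    · rwa [hy, one_mul]
    · exact h.cons b y
  · rw [toList_of_smul_of_toList_eq_cons _ hw]
    rw [hw] at h
    split_ifs with hyu
    · exact h.pop hyu
    · exact h.mergeHead b y

theorem Admissible.push_right_of_one {w : Word fun _ : Bool => Y} (h : Admissible 1 w.toList)
    (c : Y) : Admissible 1 ((of (i := false) c : CoprodI fun _ : Bool => Y) • w).toList := by
  rcases fstIdx_ne_or_toList_eq_cons w false with hw | ⟨u, t, hw⟩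
  · rw [toList_of_smul_of_fstIdx_ne _ hw]
    split_ifs
    · exact h
    · exact h.consRight c
  · rw [toList_of_smul_of_toList_eq_cons _ hw]
    rw [hw] at h
    split_ifs with hcu
    · exact h.pop_right (mul_one 1) (by rwa [mul_one, one_mul])
    · exact h.mergeRight c

theorem Compatible.push_left_right {w₁ w₂ : Word fun _ : Bool => Y} (h : Compatible w₁ w₂)
    (y : Y) : Compatible ((of (i := true) y : CoprodI fun _ : Bool => Y) • w₁)
      ((of (i := false) y : CoprodI fun _ : Bool => Y) • w₂) := by
  rcases pending_push_left y w₁ with hp | ⟨hp, hp'⟩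
  · rw [Compatible, hp]
    exact Admissible.push h false y
  · rw [Compatible, hp']
    exact Admissible.push_right_of_one (hp ▸ h) y

theorem Compatible.push_right {w₁ w₂ : Word fun _ : Bool => Y} (h : Compatible w₁ w₂)
    (b : Bool) (y : Y) : Compatible ((of (i := false) y : CoprodI fun _ : Bool => Y) • w₁)
      ((of (i := b) y : CoprodI fun _ : Bool => Y) • w₂) := by
  rw [Compatible, pending_push_right]
  exact Admissible.push h b y

theorem Compatible.maltsevMap_smul {w₁ w₂ : Word fun _ : Bool => Y} (h : Compatible w₁ w₂)
    (c : Coprod Y (Coprod Y Y)) :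
    Compatible (toCoprodI (maltsevMap c).1 • w₁) (toCoprodI (maltsevMap c).2 • w₂) := by
  induction c using Coprod.induction_on generalizing w₁ w₂ with
  | inl y => simpa [maltsevMap, toCoprodI] using h.push_left_right y
  | inr q =>
    induction q using Coprod.induction_on generalizing w₁ w₂ with
    | inl y => simpa [maltsevMap, toCoprodI] using h.push_right false y
    | inr y => simpa [maltsevMap, toCoprodI] using h.push_right true y
    | mul p q ihp ihq =>
      simp only [map_mul, Prod.fst_mul, Prod.snd_mul, mul_smul] at ihp ihq ⊢
      exact ihp (ihq h)
  | mul p q ihp ihq =>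
    simp only [map_mul, Prod.fst_mul, Prod.snd_mul, mul_smul]
    exact ihp (ihq h)

theorem isUnit_of_compatible_inl_smul_empty {x : Y}
    (h : Compatible (toCoprodI (Coprod.inl x) • (empty : Word fun _ : Bool => Y))
      (toCoprodI (Coprod.inl x) • (empty : Word fun _ : Bool => Y))) :
    IsUnit x := by
  by_cases hx : x = 1
  · exact hx ▸ isUnit_one
  have hl : (toCoprodI (Coprod.inl x) • (empty : Word fun _ : Bool => Y)).toList =
      [⟨true, x⟩] := by
    rw [toCoprodI, Coprod.lift_apply_inl,
      toList_of_smul_of_fstIdx_ne (M := fun _ : Bool => Y) x (by simp [fstIdx]), if_neg hx,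
      empty_toList]
  rw [Compatible, hl] at h
  simpa only [one_mul] using h.isUnit_mul_of_singleton_left (one_mul 1)

end WMaltsev

open Monoid

/-- A monoid `Y` is a W-Mal'tsev object in `Mon` iff it is a group. It suffices to
prove: if for every `x : Y` the element `(ι₁ x, ι₁ x)` of `(Y ∗ Y) × (Y ∗ Y)` lies
in the image of the homomorphism `Y ∗ (Y ∗ Y) →* (Y ∗ Y) × (Y ∗ Y)` induced by
`ι₁ ↦ (ι₁, ι₂)`, `ι₂ ↦ (ι₂, ι₂)`, `ι₃ ↦ (ι₂, ι₁)`, then every element of `Y` has a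
two-sided inverse. -/
theorem W_maltsev_monoid_is_group {Y : Type*} [Monoid Y]
    (f : Coprod Y (Coprod Y Y) →* (Coprod Y Y) × (Coprod Y Y))
    (hf : f = Coprod.lift
      ((Coprod.inl : Y →* Coprod Y Y).prod (Coprod.inr : Y →* Coprod Y Y))
      (Coprod.lift
        ((Coprod.inr : Y →* Coprod Y Y).prod (Coprod.inr : Y →* Coprod Y Y))
        ((Coprod.inr : Y →* Coprod Y Y).prod (Coprod.inl : Y →* Coprod Y Y))))
    (h : ∀ x : Y, ∃ a, f a = (Coprod.inl x, Coprod.inl x)) :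
    ∀ x : Y, ∃ y : Y, x * y = 1 ∧ y * x = 1 := by
  classical
  intro x
  obtain ⟨a, ha⟩ := h x
  have hfa : WMaltsev.maltsevMap a = (Coprod.inl x, Coprod.inl x) := by
    subst hf
    exact ha
  have key := WMaltsev.compatible_empty.maltsevMap_smul a
  rw [hfa] at key
  exact isUnit_iff_exists.1 (WMaltsev.isUnit_of_compatible_inl_smul_empty key)
end

section
/- Let V be a unital integral quantale and Y a V-category (a set with Y(−,−) : Y × Y → V satisfying ⊤ ≤ Y(x,x) and Y(x,y) ⊗ Y(y,z) ≤ Y(x,z)). Then the following are equivalent: (ii) for all x, y, z ∈ Y, Y(z,x) ∧ Y(z,y) ≤ Y(x,y); (iii) Y is symmetric (Y(x,y) = Y(y,x) for all x,y) and satisfies Y(x,y) ∧ Y(y,z) ≤ Y(x,z) for all x,y,z. -/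
section

variable {L Y : Type*} [SemilatticeInf L] [OrderTop L] {d : Y → Y → L}

theorem le_swap_of_inf_le_of_top_le (hrefl : ∀ x, ⊤ ≤ d x x)
    (h : ∀ x y z, d z x ⊓ d z y ≤ d x y) (x y : Y) : d y x ≤ d x y :=
  calc d y x = d y x ⊓ d y y := by rw [top_le_iff.mp (hrefl y), inf_top_eq]
    _ ≤ d x y := h x y y

theorem symm_of_inf_le_of_top_le (hrefl : ∀ x, ⊤ ≤ d x x)
    (h : ∀ x y z, d z x ⊓ d z y ≤ d x y) (x y : Y) : d x y = d y x :=
  le_antisymm (le_swap_of_inf_le_of_top_le hrefl h y x) (le_swap_of_inf_le_of_top_le hrefl h x y)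

end

theorem W_maltsev_Vcat_conditions_general {V : Type*} [CompleteLattice V]
    {Y : Type*} (d : Y → Y → V)
    (hrefl : ∀ x : Y, ⊤ ≤ d x x) :
    (∀ x y z : Y, d z x ⊓ d z y ≤ d x y) ↔
    ((∀ x y : Y, d x y = d y x) ∧ (∀ x y z : Y, d x y ⊓ d y z ≤ d x z)) := by
  constructor
  · intro h
    have hsymm := symm_of_inf_le_of_top_le hrefl h
    exact ⟨hsymm, fun x y z => hsymm x y ▸ h x z y⟩
  · rintro ⟨hsymm, htri⟩ x y z
    simpa only [hsymm z x] using htri x z y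

/-- For a `V`-category `Y` over a unital integral quantale `V`, condition
(ii) `Y(z,x) ∧ Y(z,y) ≤ Y(x,y)` is equivalent to (iii) `Y` being a symmetric
`V_∧`-category. -/
theorem W_maltsev_Vcat_conditions {V : Type*} [CompleteLattice V] [Monoid V]
    (hone : (1 : V) = ⊤)
    (hdistl : ∀ (a : V) (s : Set V), a * sSup s = ⨆ b ∈ s, a * b)
    (hdistr : ∀ (a : V) (s : Set V), sSup s * a = ⨆ b ∈ s, b * a)
    {Y : Type*} (d : Y → Y → V)
    (hrefl : ∀ x : Y, ⊤ ≤ d x x)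
    (htrans : ∀ x y z : Y, d x y * d y z ≤ d x z) :
    (∀ x y z : Y, d z x ⊓ d z y ≤ d x y) ↔
    ((∀ x y : Y, d x y = d y x) ∧ (∀ x y z : Y, d x y ⊓ d y z ≤ d x z)) :=
  W_maltsev_Vcat_conditions_general d hrefl
end

section
/- Let Y be a symmetric V-category over a unital integral quantale V satisfying Y(x,y) ∧ Y(y,z) ≤ Y(x,z). Define X = {(x,y,z) ∈ Y³ : y = z or x = y} with the structure X(p, q) = Y(p₁,q₁) ∧ Y(p₂,q₂) ∧ Y(p₃,q₃), and define g : X → Y by g(x,y,y) = x and g(y,y,x) = x. Then g is a V-functor: X(p,q) ≤ Y(g p, g q) for all p, q ∈ X. -/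
/-- If `Y` is a symmetric `V_∧`-category, then the map
`g : X → Y`, `g(x,y,y) = x`, `g(y,y,x) = x`, defined on
`X = {(x,y,z) : y = z or x = y} ⊆ Y³` with the meet structure, is a `V`-functor. -/
theorem g_is_V_functor {V : Type*} [CompleteLattice V] [Monoid V]
    (hone : (1 : V) = ⊤)
    (hdistl : ∀ (a : V) (s : Set V), a * sSup s = ⨆ b ∈ s, a * b)
    (hdistr : ∀ (a : V) (s : Set V), sSup s * a = ⨆ b ∈ s, b * a)
    {Y : Type*} (d : Y → Y → V)
    (hrefl : ∀ x : Y, ⊤ ≤ d x x)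
    (htrans : ∀ x y z : Y, d x y * d y z ≤ d x z)
    (hsym : ∀ x y : Y, d x y = d y x)
    (hmeet : ∀ x y z : Y, d x y ⊓ d y z ≤ d x z)
    (g : {p : Y × Y × Y // p.2.1 = p.2.2 ∨ p.1 = p.2.1} → Y)
    (hg1 : ∀ x y : Y, g ⟨(x, y, y), Or.inl rfl⟩ = x)
    (hg2 : ∀ x y : Y, g ⟨(y, y, x), Or.inr rfl⟩ = x) :
    ∀ p q : {p : Y × Y × Y // p.2.1 = p.2.2 ∨ p.1 = p.2.1},
      d p.val.1 q.val.1 ⊓ d p.val.2.1 q.val.2.1 ⊓ d p.val.2.2 q.val.2.2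
        ≤ d (g p) (g q) := by
  have key1 : ∀ (x y z : Y) (h : y = z) (hp : (x,y,z).2.1 = (x,y,z).2.2 ∨ (x,y,z).1 = (x,y,z).2.1),
      g ⟨(x, y, z), hp⟩ = x := by
    intro x y z h; subst h; intro hp; exact hg1 x y
  have key2 : ∀ (x y z : Y) (h : x = y) (hp : (x,y,z).2.1 = (x,y,z).2.2 ∨ (x,y,z).1 = (x,y,z).2.1),
      g ⟨(x, y, z), hp⟩ = z := by
    intro x y z h; subst h; intro hp; exact hg2 z x
  rintro ⟨⟨x, y, z⟩, hp⟩ ⟨⟨a, b, c⟩, hq⟩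
  simp only []
  rcases hp with h | h <;> rcases hq with h' | h' <;>
    [(replace h : y = z := h; replace h' : b = c := h');
     (replace h : y = z := h; replace h' : a = b := h');
     (replace h : x = y := h; replace h' : b = c := h');
     (replace h : x = y := h; replace h' : a = b := h')]
  · rw [key1 x y z h _, key1 a b c h' _]
    subst h; subst h'
    exact inf_le_of_left_le inf_le_left
  · rw [key1 x y z h _, key2 a b c h' _]
    subst h; subst h'
    calc d x a ⊓ d y a ⊓ d y c ≤ (d x a ⊓ d a y) ⊓ d y c := by rw [hsym y a]
      _ ≤ d x y ⊓ d y c := inf_le_inf_right _ (hmeet x a y)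
      _ ≤ d x c := hmeet x y c
  · rw [key2 x y z h _, key1 a b c h' _]
    subst h; subst h'
    calc d x a ⊓ d x b ⊓ d z b ≤ d z b ⊓ d x b ⊓ d x a := by
          rw [inf_comm, inf_assoc, inf_comm (d x b), ← inf_assoc]
      _ ≤ (d z b ⊓ d b x) ⊓ d x a := by rw [hsym x b]
      _ ≤ d z x ⊓ d x a := inf_le_inf_right _ (hmeet z b x)
      _ ≤ d z a := hmeet z x a
  · rw [key2 x y z h _, key2 a b c h' _]
    subst h; subst h'
    exact inf_le_right
end

section
/- Let Y be a V-category over a unital integral quantale V, let X = {(x,y,z) ∈ Y³ : y = z or x = y} with X(p,q) = Y(p₁,q₁) ∧ Y(p₂,q₂) ∧ Y(p₃,q₃), and g : X → Y with g(x,y,y) = x, g(y,y,x) = x. If g is a V-functor (X(p,q) ≤ Y(g p, g q) for all p,q ∈ X), then for all x,y,z ∈ Y: Y(z,x) ∧ Y(z,y) ≤ Y(x,y). -/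
theorem V_functor_implies_condition_ii_general {V : Type*} [CompleteLattice V]
    {Y : Type*} (d : Y → Y → V)
    (hrefl : ∀ x : Y, ⊤ ≤ d x x)
    (g : {p : Y × Y × Y // p.2.1 = p.2.2 ∨ p.1 = p.2.1} → Y)
    (hg1 : ∀ x y : Y, g ⟨(x, y, y), Or.inl rfl⟩ = x)
    (hg2 : ∀ x y : Y, g ⟨(y, y, x), Or.inr rfl⟩ = x)
    (hgfun : ∀ p q : {p : Y × Y × Y // p.2.1 = p.2.2 ∨ p.1 = p.2.1},
      d p.val.1 q.val.1 ⊓ d p.val.2.1 q.val.2.1 ⊓ d p.val.2.2 q.val.2.2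
        ≤ d (g p) (g q)) :
    ∀ x y z : Y, d z x ⊓ d z y ≤ d x y := by
  intro x y z
  have h := hgfun ⟨(x, z, z), Or.inl rfl⟩ ⟨(x, x, y), Or.inr rfl⟩
  simpa only [hg1, hg2, top_le_iff.mp (hrefl x), top_inf_eq] using h

/-- If the map `g : X → Y`, `g(x,y,y) = x`, `g(y,y,x) = x` on
`X = {(x,y,z) : y = z or x = y} ⊆ Y³` (with the meet structure) is a `V`-functor,
then `Y(z,x) ∧ Y(z,y) ≤ Y(x,y)` for all `x, y, z`. -/
theorem V_functor_implies_condition_ii {V : Type*} [CompleteLattice V] [Monoid V]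
    (hone : (1 : V) = ⊤)
    (hdistl : ∀ (a : V) (s : Set V), a * sSup s = ⨆ b ∈ s, a * b)
    (hdistr : ∀ (a : V) (s : Set V), sSup s * a = ⨆ b ∈ s, b * a)
    {Y : Type*} (d : Y → Y → V)
    (hrefl : ∀ x : Y, ⊤ ≤ d x x)
    (htrans : ∀ x y z : Y, d x y * d y z ≤ d x z)
    (g : {p : Y × Y × Y // p.2.1 = p.2.2 ∨ p.1 = p.2.1} → Y)
    (hg1 : ∀ x y : Y, g ⟨(x, y, y), Or.inl rfl⟩ = x)
    (hg2 : ∀ x y : Y, g ⟨(y, y, x), Or.inr rfl⟩ = x)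
    (hgfun : ∀ p q : {p : Y × Y × Y // p.2.1 = p.2.2 ∨ p.1 = p.2.1},
      d p.val.1 q.val.1 ⊓ d p.val.2.1 q.val.2.1 ⊓ d p.val.2.2 q.val.2.2
        ≤ d (g p) (g q)) :
    ∀ x y z : Y, d z x ⊓ d z y ≤ d x y :=
  V_functor_implies_condition_ii_general d hrefl g hg1 hg2 hgfun
end

section
/- In the category of V-categories over a unital integral quantale V, the regular monomorphisms are closed under pushout along arbitrary morphisms. Concretely: given a V-functor f : X → Y and a fully faithful injective V-functor (isometric embedding) m : X ↪ Z, the pushout W = (Y + Z)/∼ (identifying m(x) with f(x)), equipped with W([y],[y']) = Y(y,y') ∨ ⋁{Z(x,x') : x ∼ y, x' ∼ y'}, satisfies W([y],[y']) = Y(y,y') for all y,y' ∈ Y; hence the induced map Y → W is a fully faithful injective V-functor. -/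
theorem VCat_pushout_of_regular_mono_general {V : Type*} [CompleteLattice V]
    {X Y Z : Type*} (dX : X → X → V) (dY : Y → Y → V) (dZ : Z → Z → V)
    (f : X → Y) (hf : ∀ x x' : X, dX x x' ≤ dY (f x) (f x'))
    (m : X → Z)
    (hmreg : ∀ x x' : X, dX x x' = dZ (m x) (m x')) :
    ∀ y y' : Y,
      dY y y' ⊔ (⨆ x : X, ⨆ x' : X, ⨆ _ : f x = y, ⨆ _ : f x' = y', dZ (m x) (m x'))
        = dY y y' := by
  intro y y'
  refine sup_eq_left.2 (iSup₂_le fun x x' => iSup₂_le fun hx hx' => ?_)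
  subst hx hx'
  exact hmreg x x' ▸ hf x x'

/-- Pushouts in `V`-Cat preserve regular monomorphisms: given a `V`-functor
`f : X → Y` and an isometric embedding `m : X ↪ Z`, the pushout structure on the
copy of `Y` inside `W = (Y + Z)/∼` agrees with that of `Y`. -/
theorem VCat_pushout_of_regular_mono {V : Type*} [CompleteLattice V] [Monoid V]
    (hone : (1 : V) = ⊤)
    (hdistl : ∀ (a : V) (s : Set V), a * sSup s = ⨆ b ∈ s, a * b)
    (hdistr : ∀ (a : V) (s : Set V), sSup s * a = ⨆ b ∈ s, b * a)
    {X Y Z : Type*} (dX : X → X → V) (dY : Y → Y → V) (dZ : Z → Z → V)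
    (hXrefl : ∀ x : X, ⊤ ≤ dX x x) (hXtrans : ∀ x y z : X, dX x y * dX y z ≤ dX x z)
    (hYrefl : ∀ x : Y, ⊤ ≤ dY x x) (hYtrans : ∀ x y z : Y, dY x y * dY y z ≤ dY x z)
    (hZrefl : ∀ x : Z, ⊤ ≤ dZ x x) (hZtrans : ∀ x y z : Z, dZ x y * dZ y z ≤ dZ x z)
    (f : X → Y) (hf : ∀ x x' : X, dX x x' ≤ dY (f x) (f x'))
    (m : X → Z) (hminj : Function.Injective m)
    (hmreg : ∀ x x' : X, dX x x' = dZ (m x) (m x')) :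
    ∀ y y' : Y,
      dY y y' ⊔ (⨆ x : X, ⨆ x' : X, ⨆ _ : f x = y, ⨆ _ : f x' = y', dZ (m x) (m x'))
        = dY y y' :=
  VCat_pushout_of_regular_mono_general dX dY dZ f hf m hmreg
end

section
/- Let V be a unital integral quantale that is not cartesian, so there exist u, v ∈ V with u ⊗ v < u ∧ v. Define symmetric V-categories A = {0,1} with A(0,1) = A(1,0) = u, C = {1,2} with C(1,2) = C(2,1) = v, and D = {0,1,2} with D(0,1) = u, D(1,2) = v, D(0,2) = D(2,0) = u ∧ v (and symmetric, with diagonal values ⊤). Then D is a valid V-category (satisfies ⊤ ≤ D(x,x) and D(x,y) ⊗ D(y,z) ≤ D(x,z)), but the pushout structure on A ∪_{{1}} C, which assigns distance u ⊗ v between 0 and 2, differs from D; hence the comparison bijection A +_Y C → D is not an isometry. -/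
open Classical in
/-- The three-point `V`-category `D = {0,1,2}` with `D(0,1) = u`, `D(1,2) = v`,
`D(0,2) = u ∧ v` (symmetric, diagonal `⊤`). -/
noncomputable def Ddist {V : Type*} [CompleteLattice V] (u v : V) :
    Fin 3 → Fin 3 → V := fun i j =>
  if i = j then ⊤
  else if (i = 0 ∧ j = 1) ∨ (i = 1 ∧ j = 0) then u
  else if (i = 1 ∧ j = 2) ∨ (i = 2 ∧ j = 1) then v
  else u ⊓ v

/-- If `V` is a non-cartesian unital integral quantale, with `u ⊗ v < u ∧ v`,
then `D` above is a valid `V`-category, but its distance `u ∧ v` between `0` and `2`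
differs from the pushout distance `u ⊗ v`; hence the comparison bijection is not an
isometry. -/
theorem Ddist_is_Vcat_but_not_pushout {V : Type*} [CompleteLattice V] [Monoid V]
    (hone : (1 : V) = ⊤)
    (hdistl : ∀ (a : V) (s : Set V), a * sSup s = ⨆ b ∈ s, a * b)
    (hdistr : ∀ (a : V) (s : Set V), sSup s * a = ⨆ b ∈ s, b * a)
    (u v : V) (huv : u * v < u ⊓ v) :
    (∀ x : Fin 3, ⊤ ≤ Ddist u v x x) ∧
    (∀ x y z : Fin 3, Ddist u v x y * Ddist u v y z ≤ Ddist u v x z) ∧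
    u * v ≠ Ddist u v 0 2 := by
  have hmulle : ∀ a b : V, a * b ≤ a ⊓ b := by
    intro a b
    have h1 : a * b ≤ a := by
      have : a * ⊤ = a := by rw [← hone, mul_one]
      calc a * b ≤ ⨆ c ∈ ({b, ⊤} : Set V), a * c := by
            exact le_biSup (f := fun c => a * c) (Or.inl rfl)
        _ = a * sSup {b, ⊤} := (hdistl a _).symm
        _ = a * ⊤ := by rw [sSup_pair, sup_top_eq]
        _ = a := this
    have h2 : a * b ≤ b := by
      have : ⊤ * b = b := by rw [← hone, one_mul]
      calc a * b ≤ ⨆ c ∈ ({a, ⊤} : Set V), c * b := by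
            exact le_biSup (f := fun c => c * b) (Or.inl rfl)
        _ = sSup {a, ⊤} * b := (hdistr b _).symm
        _ = ⊤ * b := by rw [sSup_pair, sup_top_eq]
        _ = b := this
    exact le_inf h1 h2
  refine ⟨fun x => by simp [Ddist], ?_, ?_⟩
  · intro x y z
    refine le_trans (hmulle _ _) ?_
    fin_cases x <;> fin_cases y <;> fin_cases z <;>
      simp [Ddist, Fin.ext_iff, inf_assoc, inf_comm, inf_left_comm] <;>
      first
        | exact inf_le_left
        | exact inf_le_right
        | exact le_trans inf_le_left inf_le_left
        | exact le_trans inf_le_left inf_le_right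
        | exact le_trans inf_le_right inf_le_left
        | exact le_trans inf_le_right inf_le_right
  · have : Ddist u v 0 2 = u ⊓ v := by simp [Ddist]
    rw [this]
    exact ne_of_lt huv
end
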